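/- arXiv:2012.06158 — 5 statements merged into one kernel-verified Lean document; each statement's English description precedes it below -/
import Mathlib

section
/- If A is a square real matrix and P is a symmetric positive definite matrix such that P A + Aᵀ P ⪯ -2λP for some λ > 0, then every eigenvalue of A has real part at most -λ. -/
open Matrix

private lemma quad_re {n : ℕ} (M : Matrix (Fin n) (Fin n) ℝ) (v : Fin n → ℂ) :
    (star v ⬝ᵥ ((M.map (algebraMap ℝ ℂ)) *ᵥ v)).re =
      (fun i => (v i).re) ⬝ᵥ (M *ᵥ fun i => (v i).re)
      + (fun i => (v i).im) ⬝ᵥ (M *ᵥ fun i => (v i).im) := by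
  simp only [dotProduct, mulVec, map_apply, Pi.star_apply, RCLike.star_def,
    Complex.coe_algebraMap, Complex.re_sum, Finset.mul_sum, ← Finset.sum_add_distrib]
  refine Finset.sum_congr rfl fun i _ => ?_
  refine Finset.sum_congr rfl fun j _ => ?_
  simp [Complex.mul_re, Complex.conj_re, Complex.conj_im]

/-- If `P A + Aᵀ P ⪯ -2λ P` for symmetric positive definite `P` and `λ > 0`,
then every (complex) eigenvalue of `A` has real part at most `-λ`. -/
theorem stmt0 {n : ℕ} (A P : Matrix (Fin n) (Fin n) ℝ) (lam : ℝ)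
    (hP : P.PosDef) (hlam : 0 < lam)
    (hLoewner : ((-(2 * lam)) • P - (P * A + Aᵀ * P)).PosSemidef) :
    ∀ μ ∈ spectrum ℂ (A.map (algebraMap ℝ ℂ)), μ.re ≤ -lam := by
  intro μ hμ
  set B := A.map (algebraMap ℝ ℂ) with hB
  -- extract an eigenvector
  rw [spectrum.mem_iff, Matrix.isUnit_iff_isUnit_det, isUnit_iff_ne_zero, not_not] at hμ
  obtain ⟨v, hv, h0⟩ := (Matrix.exists_mulVec_eq_zero_iff).2 hμ
  have h1 : (algebraMap ℂ (Matrix (Fin n) (Fin n) ℂ)) μ *ᵥ v = μ • v := by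
    simp [Algebra.algebraMap_eq_smul_one, Matrix.smul_mulVec]
  rw [Matrix.sub_mulVec, h1, sub_eq_zero] at h0
  have hev : B *ᵥ v = μ • v := h0.symm
  -- real and imaginary parts of v
  set x : Fin n → ℝ := fun i => (v i).re with hx
  set y : Fin n → ℝ := fun i => (v i).im with hy
  set Pc := P.map (algebraMap ℝ ℂ) with hPc
  set s : ℂ := star v ⬝ᵥ (Pc *ᵥ v) with hs
  -- s.re > 0
  have hxy : x ≠ 0 ∨ y ≠ 0 := by
    by_contra h
    push_neg at h
    apply hv
    funext i
    have := congrFun h.1 i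
    have := congrFun h.2 i
    exact Complex.ext (by simpa using congrFun h.1 i) (by simpa using congrFun h.2 i)
  have hsre : 0 < s.re := by
    rw [hs, quad_re]
    rcases hxy with h | h
    · have h1 := hP.dotProduct_mulVec_pos h
      have h2 : (0:ℝ) ≤ y ⬝ᵥ (P *ᵥ y) := by
        have := hP.posSemidef.dotProduct_mulVec_nonneg y
        simpa using this
      have h1' : 0 < x ⬝ᵥ (P *ᵥ x) := by simpa [star, dotProduct_comm] using h1
      linarith
    · have h1 := hP.dotProduct_mulVec_pos h
      have h2 : (0:ℝ) ≤ x ⬝ᵥ (P *ᵥ x) := by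
        have := hP.posSemidef.dotProduct_mulVec_nonneg x
        simpa using this
      have h1' : 0 < y ⬝ᵥ (P *ᵥ y) := by simpa [star, dotProduct_comm] using h1
      linarith
  -- key inequality from PosSemidef of Q
  set Q := (-(2 * lam)) • P - (P * A + Aᵀ * P) with hQ
  have hQquad : (0:ℝ) ≤ (star v ⬝ᵥ ((Q.map (algebraMap ℝ ℂ)) *ᵥ v)).re := by
    rw [quad_re]
    have h1 : (0:ℝ) ≤ x ⬝ᵥ (Q *ᵥ x) := by simpa using hLoewner.dotProduct_mulVec_nonneg x
    have h2 : (0:ℝ) ≤ y ⬝ᵥ (Q *ᵥ y) := by simpa using hLoewner.dotProduct_mulVec_nonneg y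
    linarith
  -- compute the complex quadratic form of Q
  have hstar : B *ᵥ star v = star (B *ᵥ v) := by
    funext i
    simp [hB, mulVec, dotProduct, map_sum, Complex.conj_ofReal, mul_comm]
  have hAt : star v ⬝ᵥ ((Bᵀ * Pc) *ᵥ v) = (starRingEnd ℂ) μ * s := by
    rw [← Matrix.mulVec_mulVec, Matrix.dotProduct_mulVec, Matrix.vecMul_transpose, hstar, hev,
      star_smul]
    simp [hs, smul_dotProduct, smul_eq_mul, Complex.star_def, mul_comm]
  have hPA : star v ⬝ᵥ ((Pc * B) *ᵥ v) = μ * s := by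
    rw [← Matrix.mulVec_mulVec, hev]
    simp [hs, mulVec_smul, dotProduct_smul]
  have hQmap : Q.map (algebraMap ℝ ℂ) =
      ((-(2 * lam) : ℝ) : ℂ) • Pc - (Pc * B + Bᵀ * Pc) := by
    have hsub : ∀ (M N : Matrix (Fin n) (Fin n) ℝ),
        (M - N).map (algebraMap ℝ ℂ) = M.map (algebraMap ℝ ℂ) - N.map (algebraMap ℝ ℂ) := by
      intro M N; funext i j; simp
    have hadd : ∀ (M N : Matrix (Fin n) (Fin n) ℝ),
        (M + N).map (algebraMap ℝ ℂ) = M.map (algebraMap ℝ ℂ) + N.map (algebraMap ℝ ℂ) := by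
      intro M N; funext i j; simp
    have hmul : ∀ (M N : Matrix (Fin n) (Fin n) ℝ),
        (M * N).map (algebraMap ℝ ℂ) = M.map (algebraMap ℝ ℂ) * N.map (algebraMap ℝ ℂ) :=
      fun M N => Matrix.map_mul
    have hsmul : ((-(2 * lam)) • P).map (algebraMap ℝ ℂ) = ((-(2 * lam) : ℝ) : ℂ) • Pc := by
      funext i j; simp [hPc]
    have htr : Aᵀ.map (algebraMap ℝ ℂ) = Bᵀ := by
      funext i j; simp [hB]
    rw [hQ, hsub, hadd, hmul, hmul, hsmul, htr]
  have hform : star v ⬝ᵥ ((Q.map (algebraMap ℝ ℂ)) *ᵥ v)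
      = ((-(2 * lam) : ℝ) : ℂ) * s - (μ * s + (starRingEnd ℂ) μ * s) := by
    rw [hQmap, Matrix.sub_mulVec, Matrix.add_mulVec, dotProduct_sub, dotProduct_add,
      hPA, hAt]
    congr 1
    rw [smul_mulVec, dotProduct_smul]
    simp [hs]
  -- finish
  have hre : (star v ⬝ᵥ ((Q.map (algebraMap ℝ ℂ)) *ᵥ v)).re
      = (-(2 * lam) - 2 * μ.re) * s.re := by
    rw [hform]
    have : μ * s + (starRingEnd ℂ) μ * s = ((2 * μ.re : ℝ) : ℂ) * s := by
      rw [← add_mul, Complex.add_conj]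
    rw [this]
    simp [Complex.sub_re, Complex.mul_re, Complex.ofReal_re, Complex.ofReal_im]
    ring
  rw [hre] at hQquad
  nlinarith [hsre, hQquad]
end

section
/- Let P be symmetric positive definite and Q symmetric. If the matrix (Φ - (r/2)F) + (Φ - (r/2)F)ᵀ - (Φ + (r/2)F)ᵀ P⁻¹ (Φ + (r/2)F) - P - rQ is positive semidefinite for some r > 0, then Φᵀ P⁻¹ F + Fᵀ P⁻¹ Φ ⪯ -Q. -/
open Matrix

lemma posSemidef_smul_aux {n : ℕ} {M : Matrix (Fin n) (Fin n) ℝ} (hM : M.PosSemidef)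
    {c : ℝ} (hc : 0 ≤ c) : (c • M).PosSemidef := by
  have h1 : (c • M).IsHermitian := by
    simp [Matrix.IsHermitian, conjTranspose_smul, show Mᵀ = M from by simpa [Matrix.IsSymm] using hM.1]
  refine PosSemidef.of_dotProduct_mulVec_nonneg h1 (fun x => ?_)
  have := hM.dotProduct_mulVec_nonneg x
  simp only [smul_mulVec, dotProduct_smul, smul_eq_mul]
  exact mul_nonneg hc this

/-- If `(Φ - (r/2)F) + (Φ - (r/2)F)ᵀ - (Φ + (r/2)F)ᵀ P⁻¹ (Φ + (r/2)F) - P - rQ ⪰ 0`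
for some `r > 0`, then `Φᵀ P⁻¹ F + Fᵀ P⁻¹ Φ ⪯ -Q`. -/
theorem stmt2 {n : ℕ} (P Q Φ F : Matrix (Fin n) (Fin n) ℝ)
    (hP : P.PosDef) (hQ : Q.IsSymm) (r : ℝ) (hr : 0 < r)
    (h : ((Φ - (r / 2) • F) + (Φ - (r / 2) • F)ᵀ
        - (Φ + (r / 2) • F)ᵀ * P⁻¹ * (Φ + (r / 2) • F) - P - r • Q).PosSemidef) :
    ((-Q) - (Φᵀ * P⁻¹ * F + Fᵀ * P⁻¹ * Φ)).PosSemidef := by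
  set B := Φ - (r / 2) • F with hB
  set A := Φ + (r / 2) • F with hA
  have hdet : IsUnit P.det := isUnit_iff_ne_zero.mpr hP.det_pos.ne'
  have hinv : P⁻¹ * P = 1 := nonsing_inv_mul P hdet
  have hinv' : P * P⁻¹ = 1 := mul_nonsing_inv P hdet
  have hPt : Pᵀ = P := hP.1
  have hPinvt : (P⁻¹)ᵀ = P⁻¹ := (transpose_nonsing_inv P).trans (by rw [hPt])
  have h2 : ((B - P)ᵀ * P⁻¹ * (B - P)).PosSemidef := by
    have := (hP.inv.posSemidef).mul_mul_conjTranspose_same (B - P)ᵀ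
    simpa [Matrix.mul_assoc] using this
  have hsum := h.add h2
  have key : ((-Q) - (Φᵀ * P⁻¹ * F + Fᵀ * P⁻¹ * Φ))
      = (1 / r) • ((B + Bᵀ - Aᵀ * P⁻¹ * A - P - r • Q) + (B - P)ᵀ * P⁻¹ * (B - P)) := by
    have hPX : ∀ X : Matrix (Fin n) (Fin n) ℝ, P * (P⁻¹ * X) = X := fun X => by
      rw [← Matrix.mul_assoc, hinv', Matrix.one_mul]
    have e1 : (B - P)ᵀ * P⁻¹ * (B - P) = Bᵀ * P⁻¹ * B - Bᵀ - B + P := by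
      simp only [transpose_sub, Matrix.sub_mul, Matrix.mul_sub, hPt, Matrix.mul_assoc, hPX,
        hinv, Matrix.mul_one]
      abel
    have e2 : Bᵀ * P⁻¹ * B - Aᵀ * P⁻¹ * A
        = -r • (Φᵀ * P⁻¹ * F + Fᵀ * P⁻¹ * Φ) := by
      rw [hA, hB]
      simp only [transpose_add, transpose_sub, transpose_smul, Matrix.add_mul, Matrix.sub_mul,
        Matrix.mul_add, Matrix.mul_sub, Matrix.smul_mul, Matrix.mul_smul, smul_smul]
      module
    have expand : (B + Bᵀ - Aᵀ * P⁻¹ * A - P - r • Q) + (B - P)ᵀ * P⁻¹ * (B - P)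
        = r • ((-Q) - (Φᵀ * P⁻¹ * F + Fᵀ * P⁻¹ * Φ)) := by
      rw [e1]
      have : (B + Bᵀ - Aᵀ * P⁻¹ * A - P - r • Q) + (Bᵀ * P⁻¹ * B - Bᵀ - B + P)
          = (Bᵀ * P⁻¹ * B - Aᵀ * P⁻¹ * A) - r • Q := by abel
      rw [this, e2]
      module
    rw [expand, smul_smul, one_div, inv_mul_cancel₀ hr.ne', one_smul]
  rw [key]
  exact posSemidef_smul_aux hsum (by positivity)
end

section
/- If φ : ℝⁿ → ℝⁿ is strongly monotone with constant k > 0 (⟨φ(a)-φ(b), a-b⟩ ≥ k|a-b|² for all a,b) and continuous, then φ is a homeomorphism onto ℝⁿ, i.e., φ is bijective with continuous inverse. -/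
open scoped RealInnerProductSpace
open Module Submodule Function

private lemma oneDim_surj {k : ℝ} (hk : 0 < k) {g : ℝ → ℝ} (hg : Continuous g)
    (hm : ∀ s t : ℝ, k * (s - t) ^ 2 ≤ (g s - g t) * (s - t)) : Function.Surjective g := by
  intro t
  set b : ℝ := (|t - g 0| + k) / k with hb
  have hbpos : 0 < b := by positivity
  have h1 : k * b ^ 2 ≤ (g b - g 0) * b := by simpa using hm b 0
  have h2 : k * b ^ 2 ≤ (g 0 - g (-b)) * b := by
    have := hm 0 (-b); ring_nf at this ⊢; linarith
  have hkb : k * b = |t - g 0| + k := by rw [hb]; field_simp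
  have hub : t ≤ g b := by
    have : k * b ≤ g b - g 0 := by nlinarith
    have habs : t - g 0 ≤ |t - g 0| := le_abs_self _
    linarith
  have hlb : g (-b) ≤ t := by
    have : k * b ≤ g 0 - g (-b) := by nlinarith
    have habs : -(t - g 0) ≤ |t - g 0| := neg_le_abs _
    linarith
  exact intermediate_value_univ (-b) b hg ⟨hlb, hub⟩

private lemma mono_inj {E : Type*} [NormedAddCommGroup E] [InnerProductSpace ℝ E]
    {k : ℝ} (hk : 0 < k) {φ : E → E}
    (hm : ∀ a b, k * ‖a - b‖ ^ 2 ≤ ⟪φ a - φ b, a - b⟫) : Function.Injective φ := by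
  intro a b hab
  have h := hm a b
  rw [hab, sub_self, inner_zero_left] at h
  have : ‖a - b‖ ^ 2 ≤ 0 := by nlinarith
  have : ‖a - b‖ = 0 := by nlinarith [norm_nonneg (a - b), sq_nonneg ‖a - b‖]
  rwa [norm_sub_eq_zero_iff] at this

set_option maxHeartbeats 2000000 in
private lemma mono_surj : ∀ (m : ℕ) (E : Type) [NormedAddCommGroup E] [InnerProductSpace ℝ E]
    [FiniteDimensional ℝ E], finrank ℝ E = m → ∀ (k : ℝ), 0 < k →
    ∀ (φ : E → E), Continuous φ → (∀ a b, k * ‖a - b‖ ^ 2 ≤ ⟪φ a - φ b, a - b⟫) →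
    Function.Surjective φ := by
  intro m
  induction m with
  | zero =>
    intro E _ _ _ hE k hk φ hφ hm y
    have : Subsingleton E := finrank_zero_iff.mp hE
    exact ⟨y, Subsingleton.elim _ _⟩
  | succ m IH =>
    intro E _ _ _ hE k hk φ hφ hm y
    -- pick a unit vector e
    have hnt : Nontrivial E := finrank_pos_iff.mp (by rw [hE]; omega)
    obtain ⟨x0, hx0⟩ := exists_ne (0 : E)
    set e : E := ‖x0‖⁻¹ • x0 with he_def
    have he : ‖e‖ = 1 := norm_smul_inv_norm hx0
    have he0 : e ≠ 0 := by intro h; rw [h, norm_zero] at he; norm_num at he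
    set K : Submodule ℝ E := (ℝ ∙ e)ᗮ with hK_def
    have hKe : ∀ w : K, ⟪e, (w : E)⟫ = 0 := fun w =>
      w.2 e (mem_span_singleton_self e)
    have hfrK : finrank ℝ K = m := by
      have h1 : finrank ℝ (ℝ ∙ e) = 1 := finrank_span_singleton he0
      have h2 := Submodule.finrank_add_finrank_orthogonal (K := (ℝ ∙ e))
      rw [hK_def]
      omega
    set P := orthogonalProjection K with hP_def
    have hP : ∀ (z : E) (c : K), ⟪((P z : K) : E), (c : E)⟫ = ⟪z, (c : E)⟫ := by
      intro z c
      have h : ⟪z - ((P z : K) : E), (c : E)⟫ = 0 := starProjection_inner_eq_zero z (c : E) c.2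
      rw [inner_sub_left] at h
      linarith
    -- the family of maps on K
    set ψ : ℝ → K → K := fun s v => P (φ ((v : E) + s • e)) with hψ_def
    have hψmono : ∀ (s : ℝ) (v w : K), k * ‖v - w‖ ^ 2 ≤ ⟪ψ s v - ψ s w, v - w⟫ := by
      intro s v w
      have hsub : ((v : E) + s • e) - ((w : E) + s • e) = (v : E) - (w : E) := by
        abel
      have hcoe : ((v - w : K) : E) = (v : E) - (w : E) := rfl
      have hinner : ⟪ψ s v - ψ s w, v - w⟫ =
          ⟪φ ((v : E) + s • e) - φ ((w : E) + s • e), ((v : E) + s • e) - ((w : E) + s • e)⟫ := by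
        rw [Submodule.coe_inner, hsub]
        have : ((ψ s v - ψ s w : K) : E) = ((ψ s v : K) : E) - ((ψ s w : K) : E) := rfl
        rw [this, inner_sub_left, hψ_def]
        simp only []
        rw [hP, hP, ← inner_sub_left, hcoe]
      have hnorm : ‖v - w‖ = ‖((v : E) + s • e) - ((w : E) + s • e)‖ := by
        rw [hsub, ← hcoe]; rfl
      rw [hinner, hnorm]
      exact hm _ _
    have hψcont : ∀ s : ℝ, Continuous (ψ s) := by
      intro s
      exact (orthogonalProjection K).continuous.comp
        (hφ.comp (continuous_subtype_val.add continuous_const))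
    have hψsurj : ∀ s : ℝ, Function.Surjective (ψ s) :=
      fun s => IH K hfrK k hk (ψ s) (hψcont s) (hψmono s)
    have hψinj : ∀ s : ℝ, Function.Injective (ψ s) := fun s => mono_inj hk (hψmono s)
    -- target components
    set y' : K := P y with hy'_def
    -- the solution in K for each s
    choose u hu using fun s => hψsurj s y'
    -- quantitative continuity of u
    have hucont : Continuous u := by
      rw [continuous_iff_continuousAt]
      intro s₀
      have hbound : ∀ s : ℝ, dist (u s) (u s₀) ≤ (1 / k) * ‖ψ s₀ (u s₀) - ψ s (u s₀)‖ := by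
        intro s
        have h1 : k * ‖u s - u s₀‖ ^ 2 ≤ ⟪ψ s (u s) - ψ s (u s₀), u s - u s₀⟫ := hψmono s _ _
        have h2 : ψ s (u s) = ψ s₀ (u s₀) := by rw [hu s, hu s₀]
        rw [h2] at h1
        have h3 : ⟪ψ s₀ (u s₀) - ψ s (u s₀), u s - u s₀⟫ ≤
            ‖ψ s₀ (u s₀) - ψ s (u s₀)‖ * ‖u s - u s₀‖ := real_inner_le_norm _ _
        rw [dist_eq_norm]
        rcases eq_or_lt_of_le (norm_nonneg (u s - u s₀)) with hz | hz
        · rw [← hz]; positivity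
        · have h4 : k * ‖u s - u s₀‖ ^ 2 ≤ ‖ψ s₀ (u s₀) - ψ s (u s₀)‖ * ‖u s - u s₀‖ :=
            le_trans h1 h3
          rw [one_div_mul_eq_div, le_div_iff₀ hk]
          nlinarith
      have hM : Filter.Tendsto (fun s => (1 / k) * ‖ψ s₀ (u s₀) - ψ s (u s₀)‖)
          (nhds s₀) (nhds 0) := by
        have hc : Continuous fun s => (1 / k) * ‖ψ s₀ (u s₀) - ψ s (u s₀)‖ := by
          apply Continuous.mul continuous_const
          apply Continuous.norm
          apply Continuous.sub continuous_const
          exact ((orthogonalProjection K).continuous.comp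
            (hφ.comp (continuous_const.add (continuous_id.smul continuous_const))))
        have : (1 / k) * ‖ψ s₀ (u s₀) - ψ s₀ (u s₀)‖ = 0 := by simp
        simpa [this] using hc.tendsto s₀
      rw [ContinuousAt, tendsto_iff_dist_tendsto_zero]
      exact squeeze_zero (fun s => dist_nonneg) hbound hM
    -- the scalar function
    set g : ℝ → ℝ := fun s => ⟪φ ((u s : E) + s • e), e⟫ with hg_def
    have hgcont : Continuous g := by
      apply Continuous.inner _ continuous_const
      exact hφ.comp ((continuous_subtype_val.comp hucont).add
        (continuous_id.smul continuous_const))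
    have hgmono : ∀ s t : ℝ, k * (s - t) ^ 2 ≤ (g s - g t) * (s - t) := by
      intro s t
      set a : E := (u s : E) + s • e with ha_def
      set b : E := (u t : E) + t • e with hb_def
      set c : E := (u s : E) - (u t : E) with hc_def
      have hcK : ((u s - u t : K) : E) = c := rfl
      have hce : ⟪c, e⟫ = 0 := by
        rw [real_inner_comm, ← hcK]; exact hKe _
      have hab : a - b = c + (s - t) • e := by
        simp only [ha_def, hb_def, hc_def, sub_smul]; abel
      have hinner0 : ⟪φ a - φ b, c⟫ = 0 := by
        have e1 : ⟪φ a, ((u s - u t : K) : E)⟫ = ⟪(y' : E), ((u s - u t : K) : E)⟫ := by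
          have h := hP (φ a) (u s - u t)
          rw [show P (φ a) = y' from hu s] at h
          exact h.symm
        have e2 : ⟪φ b, ((u s - u t : K) : E)⟫ = ⟪(y' : E), ((u s - u t : K) : E)⟫ := by
          have h := hP (φ b) (u s - u t)
          rw [show P (φ b) = y' from hu t] at h
          exact h.symm
        rw [← hcK, inner_sub_left, e1, e2, sub_self]
      have hRHS : ⟪φ a - φ b, a - b⟫ = (g s - g t) * (s - t) := by
        rw [hab, inner_add_right, hinner0, real_inner_smul_right, zero_add,
          inner_sub_left]
        ring
      have hLHS : (s - t) ^ 2 ≤ ‖a - b‖ ^ 2 := by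
        rw [hab, norm_add_sq_real, real_inner_smul_right, hce, norm_smul]
        have : (|s - t| * ‖e‖) ^ 2 = (s - t) ^ 2 := by
          rw [he, mul_one, sq_abs]
        rw [Real.norm_eq_abs, this]
        nlinarith [sq_nonneg ‖c‖]
      calc k * (s - t) ^ 2 ≤ k * ‖a - b‖ ^ 2 := by nlinarith
        _ ≤ ⟪φ a - φ b, a - b⟫ := hm a b
        _ = (g s - g t) * (s - t) := hRHS
    obtain ⟨s, hs⟩ := oneDim_surj hk hgcont hgmono ⟪y, e⟫
    refine ⟨(u s : E) + s • e, ?_⟩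
    set x : E := (u s : E) + s • e
    have hPd : P (φ x - y) = 0 := by
      rw [map_sub]
      have h1 : P (φ x) = ψ s (u s) := rfl
      rw [h1, hu s, hy'_def, sub_self]
    have hd_mem : φ x - y ∈ ℝ ∙ e := by
      have := Submodule.orthogonalProjectionOnto_eq_zero_iff.mp hPd
      rwa [hK_def, Submodule.orthogonal_orthogonal] at this
    obtain ⟨c, hc⟩ := mem_span_singleton.mp hd_mem
    have hde : ⟪φ x - y, e⟫ = 0 := by
      have hgs : ⟪φ x, e⟫ = ⟪y, e⟫ := hs
      rw [inner_sub_left, hgs, sub_self]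
    rw [← hc, real_inner_smul_left, real_inner_self_eq_norm_sq, he] at hde
    have : c = 0 := by simpa using hde
    rw [this, zero_smul] at hc
    exact sub_eq_zero.mp hc.symm

/-- A continuous strongly monotone map `φ : ℝⁿ → ℝⁿ` (with constant `k > 0`) is a
homeomorphism onto `ℝⁿ`: it is bijective and its inverse is continuous
(indeed Lipschitz with constant `1/k`). -/
theorem stmt5 {n : ℕ} (k : ℝ) (hk : 0 < k)
    (φ : EuclideanSpace ℝ (Fin n) → EuclideanSpace ℝ (Fin n))
    (hφ : Continuous φ)
    (hmono : ∀ a b, k * ‖a - b‖ ^ 2 ≤ ⟪φ a - φ b, a - b⟫) :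
    Function.Bijective φ ∧ Continuous (Function.invFun φ) ∧
      LipschitzWith (Real.toNNReal (1 / k)) (Function.invFun φ) := by
  have hsurj : Function.Surjective φ :=
    mono_surj n (EuclideanSpace ℝ (Fin n)) finrank_euclideanSpace_fin k hk φ hφ hmono
  have hinj : Function.Injective φ := mono_inj hk hmono
  have hri : Function.RightInverse (Function.invFun φ) φ :=
    Function.rightInverse_invFun hsurj
  have hlip : LipschitzWith (Real.toNNReal (1 / k)) (Function.invFun φ) := by
    apply LipschitzWith.of_dist_le_mul
    intro x y
    set a := Function.invFun φ x
    set b := Function.invFun φ y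
    have hax : φ a = x := hri x
    have hby : φ b = y := hri y
    have h := hmono a b
    rw [hax, hby] at h
    have h2 : ⟪x - y, a - b⟫ ≤ ‖x - y‖ * ‖a - b‖ := real_inner_le_norm _ _
    have hco : (Real.toNNReal (1 / k) : ℝ) = 1 / k :=
      Real.coe_toNNReal _ (by positivity)
    rw [dist_eq_norm, dist_eq_norm, hco]
    rcases eq_or_lt_of_le (norm_nonneg (a - b)) with hz | hz
    · rw [← hz]; positivity
    · rw [div_mul_eq_mul_div, le_div_iff₀ hk]
      nlinarith
  exact ⟨⟨hinj, hsurj⟩, hlip.continuous, hlip⟩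
end

section
/- Suppose z : [0,∞) → ℝⁿ and ξ : [0,∞) → ℝⁿ are solutions of the same ODE ẋ = g(x,t), where g is C¹ in x and there exist a symmetric positive definite matrix M and λ > 0 with M·D_xg(x,t) + D_xg(x,t)ᵀ·M ⪯ -2λM for all (x,t). Then ‖ξ(t) - z(t)‖ ≤ √(κ(M)) e^{-λt} ‖ξ(0) - z(0)‖ for all t ≥ 0, where κ(M) is the condition number of M. -/
open Matrix

/-- Euclidean norm of a vector in `ℝⁿ`. -/
noncomputable def euclidNorm {n : ℕ} (v : Fin n → ℝ) : ℝ := Real.sqrt (∑ i, v i ^ 2)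

private lemma hasDerivAt_dotProduct' {n : ℕ} {f h : ℝ → Fin n → ℝ} {f' h' : Fin n → ℝ} {t : ℝ}
    (hf : HasDerivAt f f' t) (hh : HasDerivAt h h' t) :
    HasDerivAt (fun s => f s ⬝ᵥ h s) (f' ⬝ᵥ h t + f t ⬝ᵥ h') t := by
  simp only [dotProduct]
  rw [← Finset.sum_add_distrib]
  exact HasDerivAt.fun_sum fun i _ => (hasDerivAt_pi.mp hf i).mul (hasDerivAt_pi.mp hh i)

private lemma hasDerivAt_mulVec' {n : ℕ} (M : Matrix (Fin n) (Fin n) ℝ)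
    {f : ℝ → Fin n → ℝ} {f' : Fin n → ℝ} {t : ℝ} (hf : HasDerivAt f f' t) :
    HasDerivAt (fun s => M.mulVec (f s)) (M.mulVec f') t := by
  refine hasDerivAt_pi.mpr fun i => ?_
  simp only [Matrix.mulVec, dotProduct]
  exact HasDerivAt.fun_sum fun j _ => (hasDerivAt_pi.mp hf j).const_mul (M i j)

/-- If two solutions of `ẋ = g(x,t)` evolve under a contraction metric `M`
(`M D_xg + D_xgᵀ M ⪯ -2λM`, with `m₁ I ⪯ M ⪯ m₂ I`), then they converge:
`‖ξ(t) - z(t)‖ ≤ √(m₂/m₁) e^{-λt} ‖ξ(0) - z(0)‖`. -/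
theorem stmt6 {n : ℕ} (g : (Fin n → ℝ) → ℝ → (Fin n → ℝ))
    (M : Matrix (Fin n) (Fin n) ℝ) (m₁ m₂ lam : ℝ)
    (hMsymm : M.IsSymm) (hm₁ : 0 < m₁) (hlam : 0 < lam)
    (hbound : ∀ v : Fin n → ℝ,
      m₁ * (euclidNorm v) ^ 2 ≤ v ⬝ᵥ M.mulVec v ∧ v ⬝ᵥ M.mulVec v ≤ m₂ * (euclidNorm v) ^ 2)
    (hgc : Continuous fun p : (Fin n → ℝ) × ℝ => g p.1 p.2)
    (hg : ∀ t, ContDiff ℝ 1 fun x => g x t)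
    (hcontr : ∀ x t (v : Fin n → ℝ),
      2 * (M.mulVec v ⬝ᵥ (fderiv ℝ (fun y => g y t) x) v)
        ≤ -(2 * lam) * (v ⬝ᵥ M.mulVec v))
    (z ξ : ℝ → Fin n → ℝ)
    (hz : ∀ t ≥ 0, HasDerivAt z (g (z t) t) t)
    (hξ : ∀ t ≥ 0, HasDerivAt ξ (g (ξ t) t) t) :
    ∀ t ≥ 0, euclidNorm (ξ t - z t)
      ≤ Real.sqrt (m₂ / m₁) * Real.exp (-lam * t) * euclidNorm (ξ 0 - z 0) := by
  set v : ℝ → Fin n → ℝ := fun t => ξ t - z t with hv_def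
  set V : ℝ → ℝ := fun t => v t ⬝ᵥ M.mulVec (v t) with hV_def
  -- derivative of v
  have hv : ∀ t ≥ (0:ℝ), HasDerivAt v (g (ξ t) t - g (z t) t) t := fun t ht =>
    (hξ t ht).sub (hz t ht)
  -- derivative of V
  have hV : ∀ t ≥ (0:ℝ),
      HasDerivAt V (2 * (M.mulVec (v t) ⬝ᵥ (g (ξ t) t - g (z t) t))) t := by
    intro t ht
    have h1 := hasDerivAt_dotProduct' (hv t ht) (hasDerivAt_mulVec' M (hv t ht))
    convert h1 using 1
    have e1 : (g (ξ t) t - g (z t) t) ⬝ᵥ M.mulVec (v t)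
        = M.mulVec (v t) ⬝ᵥ (g (ξ t) t - g (z t) t) := dotProduct_comm _ _
    have e2 : v t ⬝ᵥ M.mulVec (g (ξ t) t - g (z t) t)
        = M.mulVec (v t) ⬝ᵥ (g (ξ t) t - g (z t) t) := by
      rw [Matrix.dotProduct_mulVec, ← Matrix.mulVec_transpose, hMsymm.eq]
    rw [e1, e2]; ring
  -- key bound on the derivative
  have hkey : ∀ t ≥ (0:ℝ),
      2 * (M.mulVec (v t) ⬝ᵥ (g (ξ t) t - g (z t) t)) ≤ -(2 * lam) * V t := by
    intro t ht
    set c := M.mulVec (v t) with hc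
    set w := v t with hw
    set p : ℝ → Fin n → ℝ := fun s => z t + s • w with hp
    have hpath : ∀ s : ℝ, HasDerivAt p w s := by
      intro s
      simpa [hp] using ((hasDerivAt_id s).smul_const w).const_add (z t)
    have hh : ∀ s : ℝ, HasDerivAt (fun s => c ⬝ᵥ g (p s) t)
        (c ⬝ᵥ (fderiv ℝ (fun y => g y t) (p s)) w) s := by
      intro s
      have hdiff : HasFDerivAt (fun y => g y t) (fderiv ℝ (fun y => g y t) (p s)) (p s) :=
        ((hg t).differentiable one_ne_zero (p s)).hasFDerivAt
      have := hdiff.comp_hasDerivAt s (hpath s)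
      simpa using hasDerivAt_dotProduct' (hasDerivAt_const s c) this
    have hcont : ContinuousOn (fun s => c ⬝ᵥ g (p s) t) (Set.Icc 0 1) :=
      fun s _ => ((hh s).continuousAt).continuousWithinAt
    obtain ⟨sc, _, hsc⟩ := exists_hasDerivAt_eq_slope (fun s => c ⬝ᵥ g (p s) t)
      (fun s => c ⬝ᵥ (fderiv ℝ (fun y => g y t) (p s)) w) (by norm_num : (0:ℝ) < 1)
      hcont (fun s _ => hh s)
    have hp0 : p 0 = z t := by simp [hp]
    have hp1 : p 1 = ξ t := by simp [hp, hw, hv_def]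
    have hslope : c ⬝ᵥ (fderiv ℝ (fun y => g y t) (p sc)) w
        = c ⬝ᵥ g (ξ t) t - c ⬝ᵥ g (z t) t := by
      rw [hsc, hp0, hp1]; ring
    have hb := hcontr (p sc) t w
    rw [hslope] at hb
    calc 2 * (c ⬝ᵥ (g (ξ t) t - g (z t) t))
        = 2 * (c ⬝ᵥ g (ξ t) t - c ⬝ᵥ g (z t) t) := by rw [dotProduct_sub]
      _ ≤ -(2 * lam) * (w ⬝ᵥ M.mulVec w) := hb
      _ = -(2 * lam) * V t := rfl
  -- the Lyapunov-like function is antitone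
  set W : ℝ → ℝ := fun t => V t * Real.exp (2 * lam * t) with hW_def
  have hWderiv : ∀ t ≥ (0:ℝ), HasDerivAt W
      ((2 * (M.mulVec (v t) ⬝ᵥ (g (ξ t) t - g (z t) t)) + 2 * lam * V t)
        * Real.exp (2 * lam * t)) t := by
    intro t ht
    have he : HasDerivAt (fun t => Real.exp (2 * lam * t)) (Real.exp (2 * lam * t) * (2 * lam * 1)) t :=
      ((hasDerivAt_id t).const_mul (2 * lam)).exp
    have := (hV t ht).fun_mul he
    refine this.congr_deriv ?_; ring
  have hWanti : AntitoneOn W (Set.Ici 0) := by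
    apply antitoneOn_of_deriv_nonpos (convex_Ici 0)
    · exact fun t ht => ((hWderiv t ht).continuousAt).continuousWithinAt
    · intro t ht
      rw [interior_Ici] at ht
      exact ((hWderiv t (le_of_lt ht)).differentiableAt).differentiableWithinAt
    · intro t ht
      rw [interior_Ici] at ht
      rw [(hWderiv t (le_of_lt ht)).deriv]
      have h1 := hkey t (le_of_lt ht)
      have h2 : 2 * (M.mulVec (v t) ⬝ᵥ (g (ξ t) t - g (z t) t)) + 2 * lam * V t ≤ 0 := by
        nlinarith
      exact mul_nonpos_of_nonpos_of_nonneg h2 (Real.exp_nonneg _)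
  -- conclude
  intro t ht
  have hWle : V t * Real.exp (2 * lam * t) ≤ V 0 := by
    have := hWanti (Set.self_mem_Ici) ht ht
    simpa [hW_def] using this
  have hVt : m₁ * (euclidNorm (v t)) ^ 2 ≤ V t := (hbound (v t)).1
  have hV0 : V 0 ≤ m₂ * (euclidNorm (v 0)) ^ 2 := (hbound (v 0)).2
  have hexp : (0:ℝ) < Real.exp (2 * lam * t) := Real.exp_pos _
  have henorm_nonneg : ∀ u : Fin n → ℝ, 0 ≤ euclidNorm u := fun u => Real.sqrt_nonneg _
  by_cases hzero : euclidNorm (v t) = 0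
  · rw [show euclidNorm (ξ t - z t) = euclidNorm (v t) from rfl, hzero]
    exact mul_nonneg (mul_nonneg (Real.sqrt_nonneg _) (Real.exp_nonneg _)) (henorm_nonneg _)
  · have hpos : 0 < (euclidNorm (v t)) ^ 2 :=
      pow_pos (lt_of_le_of_ne (henorm_nonneg _) (Ne.symm hzero)) 2
    have hm₂ : 0 < m₂ := by nlinarith [(hbound (v t)).1, (hbound (v t)).2]
    have hchain : m₁ * (euclidNorm (v t)) ^ 2 * Real.exp (2 * lam * t) ≤ m₂ * (euclidNorm (v 0)) ^ 2 :=
      le_trans (le_trans (mul_le_mul_of_nonneg_right hVt hexp.le) hWle) hV0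
    have hsq : (euclidNorm (v t)) ^ 2
        ≤ (m₂ / m₁) * Real.exp (-(2 * lam * t)) * (euclidNorm (v 0)) ^ 2 := by
      rw [Real.exp_neg]
      rw [div_mul_eq_mul_div, div_mul_eq_mul_div, le_div_iff₀ hm₁]
      calc euclidNorm (v t) ^ 2 * m₁ = m₁ * euclidNorm (v t) ^ 2 := mul_comm _ _
        _ ≤ m₂ * (euclidNorm (v 0)) ^ 2 / Real.exp (2 * lam * t) := (le_div_iff₀ hexp).mpr hchain
        _ = m₂ * (Real.exp (2 * lam * t))⁻¹ * (euclidNorm (v 0)) ^ 2 := by ring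
    have hrhs : Real.sqrt (m₂ / m₁) * Real.exp (-lam * t) * euclidNorm (v 0)
        = Real.sqrt ((m₂ / m₁) * Real.exp (-(2 * lam * t)) * (euclidNorm (v 0)) ^ 2) := by
      rw [Real.sqrt_mul (by positivity), Real.sqrt_mul (by positivity),
        Real.sqrt_sq (henorm_nonneg _)]
      congr 1
      rw [show -(2 * lam * t) = -lam * t + -lam * t by ring, Real.exp_add,
        Real.sqrt_mul_self (Real.exp_nonneg _)]
    have : euclidNorm (v t) = Real.sqrt ((euclidNorm (v t)) ^ 2) := (Real.sqrt_sq (henorm_nonneg _)).symm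
    rw [show euclidNorm (ξ t - z t) = euclidNorm (v t) from rfl, this, hrhs]
    exact Real.sqrt_le_sqrt hsq
end

section
/- Define φ : ℝ² → ℝ² by φ(y₁, y₂) = -λ(∫₀^{y₁} √(1 - (b²/m)cos²(s)) ds, (b/√m)·sin(y₁) + √m·y₂) with 0 < b² < m and λ > 0. Then the Jacobian of φ satisfies Dφ(y)·Ψ(y) = -λI₂, where Ψ(y) = [[√m/√(m - b²cos²(y₁)), 0], [-b·cos(y₁)/(√m·√(m - b²cos²(y₁))), 1/√m]]. -/
set_option maxHeartbeats 1000000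

open Matrix

/-- The transformation `φ` for the cart-pendulum. -/
noncomputable def phi14 (b m lam : ℝ) (y : Fin 2 → ℝ) : Fin 2 → ℝ := fun i =>
  if i = 0 then
    -lam * ∫ s in (0 : ℝ)..(y 0), Real.sqrt (1 - (b ^ 2 / m) * Real.cos s ^ 2)
  else
    -lam * ((b / Real.sqrt m) * Real.sin (y 0) + Real.sqrt m * y 1)

/-- The mass-matrix factor `Ψ` of the cart-pendulum. -/
noncomputable def Psi14 (b m : ℝ) (y : Fin 2 → ℝ) : Matrix (Fin 2) (Fin 2) ℝ :=
  !![Real.sqrt m / Real.sqrt (m - b ^ 2 * Real.cos (y 0) ^ 2), 0;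
     -b * Real.cos (y 0) / (Real.sqrt m * Real.sqrt (m - b ^ 2 * Real.cos (y 0) ^ 2)),
     1 / Real.sqrt m]

/-- The Jacobian of `φ` satisfies `Dφ(y) Ψ(y) = -λ I₂`. -/
theorem stmt14 (b m lam : ℝ) (hb : 0 < b ^ 2) (hbm : b ^ 2 < m) (hlam : 0 < lam) :
    ∀ y : Fin 2 → ℝ,
      LinearMap.toMatrix'
          ((fderiv ℝ (phi14 b m lam) y : (Fin 2 → ℝ) →L[ℝ] (Fin 2 → ℝ)) :
            (Fin 2 → ℝ) →ₗ[ℝ] (Fin 2 → ℝ)) * Psi14 b m y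
        = (-lam) • (1 : Matrix (Fin 2) (Fin 2) ℝ) := by
  intro y
  have hm : 0 < m := hb.trans hbm
  have hmne : m ≠ 0 := ne_of_gt hm
  set c : ℝ := Real.cos (y 0) with hc
  have hc2 : c ^ 2 ≤ 1 := by
    rw [hc]; exact Real.cos_sq_le_one _
  have hpos : 0 < m - b ^ 2 * c ^ 2 := by nlinarith
  have hsm : Real.sqrt m ≠ 0 := by positivity
  have hsd : Real.sqrt (m - b ^ 2 * c ^ 2) ≠ 0 := by positivity
  -- the candidate derivative
  set L0 : (Fin 2 → ℝ) →L[ℝ] ℝ :=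
    (-lam * Real.sqrt (1 - (b ^ 2 / m) * c ^ 2)) • ContinuousLinearMap.proj 0 with hL0
  set L1 : (Fin 2 → ℝ) →L[ℝ] ℝ :=
    (-lam * ((b / Real.sqrt m) * c)) • ContinuousLinearMap.proj 0 +
      (-lam * Real.sqrt m) • ContinuousLinearMap.proj 1 with hL1
  set L : (Fin 2 → ℝ) →L[ℝ] (Fin 2 → ℝ) :=
    ContinuousLinearMap.pi (fun i => if i = 0 then L0 else L1) with hLdef
  have hfc : Continuous fun s : ℝ => Real.sqrt (1 - (b ^ 2 / m) * Real.cos s ^ 2) := by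
    continuity
  have hproj0 := (ContinuousLinearMap.proj (R := ℝ) (φ := fun _ : Fin 2 => ℝ) 0).hasFDerivAt (x := y)
  have hproj1 := (ContinuousLinearMap.proj (R := ℝ) (φ := fun _ : Fin 2 => ℝ) 1).hasFDerivAt (x := y)
  have h0 : HasFDerivAt (fun x : Fin 2 → ℝ =>
      -lam * ∫ s in (0 : ℝ)..(x 0), Real.sqrt (1 - (b ^ 2 / m) * Real.cos s ^ 2)) L0 y := by
    have hint : HasDerivAt (fun u : ℝ => ∫ s in (0 : ℝ)..u,
        Real.sqrt (1 - (b ^ 2 / m) * Real.cos s ^ 2))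
        (Real.sqrt (1 - (b ^ 2 / m) * c ^ 2)) (y 0) :=
      (hfc.integral_hasStrictDerivAt 0 (y 0)).hasDerivAt
    have := ((hint.const_mul (-lam)).comp_hasFDerivAt y hproj0)
    exact this.congr_fderiv (by ext v; simp [hL0])
  have h1 : HasFDerivAt (fun x : Fin 2 → ℝ =>
      -lam * ((b / Real.sqrt m) * Real.sin (x 0) + Real.sqrt m * x 1)) L1 y := by
    have hsin : HasFDerivAt (fun x : Fin 2 → ℝ => Real.sin (x 0))
        (c • ContinuousLinearMap.proj (R := ℝ) (φ := fun _ : Fin 2 => ℝ) 0) y :=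
      by have := (Real.hasDerivAt_sin (y 0)).comp_hasFDerivAt y hproj0; exact this
    have := (((hsin.const_mul (b / Real.sqrt m)).add
      (hproj1.const_mul (Real.sqrt m))).const_mul (-lam))
    refine this.congr_fderiv ?_
    ext v
    simp [hL1]
    ring
  have hL : HasFDerivAt (phi14 b m lam) L y := by
    apply hasFDerivAt_pi''
    intro i
    fin_cases i
    · simpa [hLdef, ContinuousLinearMap.proj_pi, phi14] using h0
    · simpa [hLdef, ContinuousLinearMap.proj_pi, phi14] using h1
  rw [hL.fderiv]
  have hrw : Real.sqrt (1 - (b ^ 2 / m) * c ^ 2)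
      = Real.sqrt (m - b ^ 2 * c ^ 2) / Real.sqrt m := by
    rw [show (1 - (b ^ 2 / m) * c ^ 2) = (m - b ^ 2 * c ^ 2) / m by field_simp,
      Real.sqrt_div hpos.le]
  have hM : LinearMap.toMatrix' ((L : (Fin 2 → ℝ) →L[ℝ] (Fin 2 → ℝ)) :
      (Fin 2 → ℝ) →ₗ[ℝ] (Fin 2 → ℝ))
      = !![-lam * (Real.sqrt (m - b ^ 2 * c ^ 2) / Real.sqrt m), 0;
           -lam * ((b / Real.sqrt m) * c), -lam * Real.sqrt m] := by
    ext i j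
    rw [LinearMap.toMatrix'_apply]
    fin_cases i <;> fin_cases j <;>
      simp [hLdef, hL0, hL1, ContinuousLinearMap.pi_apply, hrw]
  rw [hM, Psi14, ← hc]
  ext i j
  fin_cases i <;> fin_cases j <;>
    simp [Matrix.mul_apply, Fin.sum_univ_two] <;> field_simp <;> ring
end
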